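/- Two-point stationary states, coupled case, part (b): assume D^{(12)} ≠ 0, fix i ∈ {1,2} and set k := 3−i. There exist a two-species distribution ρ and indices ι ≠ κ ∈ {1,2} such that ρ^{(i)}(x_κ) = 0, v^{(i)}_{κι} > 0, and v^{(k)}_{ικ} = 0, if and only if D^{(kk)} ≠ 0, |D^{(12)}| ≤ |D^{(kk)}| and D^{(ii)} < (D^{(12)})²/D^{(kk)}. In that case, for given ι the distribution is uniquely determined: ρ^{(i)}(x_ι) = 1, ρ^{(i)}(x_κ) = 0, ρ^{(k)}(x_ι) = (1 − D^{(12)}/D^{(kk)})/2, ρ^{(k)}(x_κ) = (1 + D^{(12)}/D^{(kk)})/2; and both choices ι = 1 and ι = 2 yield such a distribution. -/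
import Mathlib


open Finset

/-- The velocity `v^{(i)}_{ικ}` on the two-point space; `ρ k l` denotes the vertex *mass*
`ρ^{(k)}(x_l)`, so that `∑_λ (ΔK) ρ^{(k)}_λ μ_λ = ∑_l (ΔK) ρ k l`. -/
noncomputable def vel2 {d : ℕ} (x : Fin 2 → EuclideanSpace ℝ (Fin d))
    (K : Fin 2 → Fin 2 → EuclideanSpace ℝ (Fin d) → EuclideanSpace ℝ (Fin d) → ℝ)
    (ρ : Fin 2 → Fin 2 → ℝ) (i ι κ : Fin 2) : ℝ :=
  ∑ k : Fin 2, ∑ l : Fin 2, (K i k (x ι) (x l) - K i k (x κ) (x l)) * ρ k l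

/-- A two-species distribution on the two-point space, in terms of the vertex masses. -/
def IsDist2 (ρ : Fin 2 → Fin 2 → ℝ) : Prop :=
  (∀ i ι, 0 ≤ ρ i ι) ∧ ∀ i, ρ i 0 + ρ i 1 = 1

/-- Proposition 3.6 b) (coupled case): a stationary state with species `i` aggregated at
`x_ι` (i.e. `ρ^{(i)}(x_κ) = 0`, `v^{(i)}_{κι} > 0`, `v^{(k)}_{ικ} = 0`) exists iff
`D^{(kk)} ≠ 0`, `|D^{(12)}| ≤ |D^{(kk)}|` and `D^{(ii)} < (D^{(12)})²/D^{(kk)}`; in that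
case it is uniquely determined for each choice of `ι`, and both choices of `ι` occur. -/
theorem two_point_stationary_coupled_b
    (d : ℕ) (x : Fin 2 → EuclideanSpace ℝ (Fin d)) (hx : x 0 ≠ x 1)
    (μ : Fin 2 → ℝ) (hμ : ∀ ι, 0 < μ ι)
    (η12 : ℝ) (hη : 0 < η12)
    (K : Fin 2 → Fin 2 → EuclideanSpace ℝ (Fin d) → EuclideanSpace ℝ (Fin d) → ℝ)
    (hKsym : ∀ i k p q, K i k p q = K i k q p)
    (hK12 : ∀ p q, K 0 1 p q = K 1 0 p q)
    (hKdiag : ∀ i k : Fin 2, ∀ p q : EuclideanSpace ℝ (Fin d), K i k p p = K i k q q)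
    (D : Fin 2 → Fin 2 → ℝ)
    (hD : ∀ i k, D i k = K i k (x 0) (x 0) - K i k (x 0) (x 1))
    (hD12 : D 0 1 ≠ 0)
    (i k : Fin 2) (hik : i ≠ k) :
    ((∃ ρ, IsDist2 ρ ∧ ∃ ι κ : Fin 2, ι ≠ κ ∧
        ρ i κ = 0 ∧ 0 < vel2 x K ρ i κ ι ∧ vel2 x K ρ k ι κ = 0)
      ↔ (D k k ≠ 0 ∧ |D 0 1| ≤ |D k k| ∧ D i i < (D 0 1) ^ 2 / D k k)) ∧
    (∀ ρ, IsDist2 ρ → ∀ ι κ : Fin 2, ι ≠ κ →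
      ρ i κ = 0 → 0 < vel2 x K ρ i κ ι → vel2 x K ρ k ι κ = 0 →
        ρ i ι = 1 ∧ ρ k ι = (1 - D 0 1 / D k k) / 2 ∧ ρ k κ = (1 + D 0 1 / D k k) / 2) ∧
    ((D k k ≠ 0 ∧ |D 0 1| ≤ |D k k| ∧ D i i < (D 0 1) ^ 2 / D k k) →
      ∀ ι κ : Fin 2, ι ≠ κ →
        ∃ ρ, IsDist2 ρ ∧ ρ i κ = 0 ∧ 0 < vel2 x K ρ i κ ι ∧ vel2 x K ρ k ι κ = 0) := by
  have hcases : ∀ a b : Fin 2, a ≠ b → (a = 0 ∧ b = 1) ∨ (a = 1 ∧ b = 0) := by decide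
  have hD' : D 1 0 = D 0 1 := by rw [hD 1 0, hD 0 1, hK12, hK12]
  have hvel : ∀ (ρ : Fin 2 → Fin 2 → ℝ) (a : Fin 2), vel2 x K ρ a 0 1 =
      D a 0 * (ρ 0 0 - ρ 0 1) + D a 1 * (ρ 1 0 - ρ 1 1) := by
    intro ρ a
    simp only [vel2, Fin.sum_univ_two, hD]
    rw [hKsym a 0 (x 1) (x 0), hKsym a 1 (x 1) (x 0),
        hKdiag a 0 (x 1) (x 0), hKdiag a 1 (x 1) (x 0)]
    ring
  have hswap : ∀ (ρ : Fin 2 → Fin 2 → ℝ) (a : Fin 2),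
      vel2 x K ρ a 1 0 = - vel2 x K ρ a 0 1 := by
    intro ρ a; simp only [vel2, Fin.sum_univ_two]; ring
  have hvel2 : ∀ (ρ : Fin 2 → Fin 2 → ℝ) (a : Fin 2), vel2 x K ρ a 0 1 =
      D a i * (ρ i 0 - ρ i 1) + D a k * (ρ k 0 - ρ k 1) := by
    intro ρ a
    rw [hvel]
    rcases hcases i k hik with ⟨hi, hk⟩ | ⟨hi, hk⟩ <;> subst hi <;> subst hk <;> ring
  have hDik : D i k = D 0 1 := by
    rcases hcases i k hik with ⟨hi, hk⟩ | ⟨hi, hk⟩ <;> subst hi <;> subst hk <;>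
      simp [hD']
  have hDki : D k i = D 0 1 := by
    rcases hcases i k hik with ⟨hi, hk⟩ | ⟨hi, hk⟩ <;> subst hi <;> subst hk <;>
      simp [hD']
  have key : ∀ ρ, IsDist2 ρ → ∀ ι κ : Fin 2, ι ≠ κ →
      ρ i κ = 0 → 0 < vel2 x K ρ i κ ι → vel2 x K ρ k ι κ = 0 →
      (D k k ≠ 0 ∧ |D 0 1| ≤ |D k k| ∧ D i i < (D 0 1) ^ 2 / D k k) ∧
      ρ i ι = 1 ∧ ρ k ι = (1 - D 0 1 / D k k) / 2 ∧ ρ k κ = (1 + D 0 1 / D k k) / 2 := by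
    intro ρ hρ ι κ hικ h0 hpos hveq
    obtain ⟨hnn, hsum⟩ := hρ
    have hk0 := hnn k 0
    have hk1 := hnn k 1
    have hsumi := hsum i
    have hsumk := hsum k
    rcases hcases ι κ hικ with ⟨hι, hκ⟩ | ⟨hι, hκ⟩ <;> subst hι <;> subst hκ
    · have hρi0 : ρ i 0 = 1 := by linarith
      rw [hvel2, hDki, hρi0, h0] at hveq
      rw [hswap, hvel2, hDik, hρi0, h0] at hpos
      have heq : D 0 1 + D k k * (ρ k 0 - ρ k 1) = 0 := by linear_combination hveq
      have hkk : D k k ≠ 0 := by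
        intro h; apply hD12; rw [h] at heq; linarith
      have hs : ρ k 0 - ρ k 1 = -(D 0 1) / D k k := by
        rw [eq_div_iff hkk]
        linear_combination heq
      have h2 : D 0 1 / D k k = -(ρ k 0 - ρ k 1) := by rw [hs]; ring
      have habs : |D 0 1| ≤ |D k k| := by
        have h1 : D 0 1 = D k k * (-(ρ k 0 - ρ k 1)) := by linear_combination heq
        rw [h1, abs_mul]
        have h3 : |(-(ρ k 0 - ρ k 1))| ≤ 1 := abs_le.mpr ⟨by linarith, by linarith⟩
        calc |D k k| * |(-(ρ k 0 - ρ k 1))| ≤ |D k k| * 1 :=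
              mul_le_mul_of_nonneg_left h3 (abs_nonneg _)
          _ = |D k k| := mul_one _
      have hq : D 0 1 * (ρ k 0 - ρ k 1) = -(D 0 1 ^ 2 / D k k) := by
        rw [hs]; ring
      refine ⟨⟨hkk, habs, by nlinarith⟩, hρi0, by rw [h2]; linarith, by rw [h2]; linarith⟩
    · have hρi1 : ρ i 1 = 1 := by linarith
      rw [hswap, hvel2, hDki, hρi1, h0] at hveq
      rw [hvel2, hDik, hρi1, h0] at hpos
      have heq : D 0 1 = D k k * (ρ k 0 - ρ k 1) := by linear_combination hveq
      have hkk : D k k ≠ 0 := by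
        intro h; apply hD12; rw [h] at heq; linarith
      have hs : ρ k 0 - ρ k 1 = D 0 1 / D k k := by
        rw [eq_div_iff hkk]
        linear_combination -heq
      have h2 : D 0 1 / D k k = ρ k 0 - ρ k 1 := hs.symm
      have habs : |D 0 1| ≤ |D k k| := by
        rw [heq, abs_mul]
        have h3 : |(ρ k 0 - ρ k 1)| ≤ 1 := abs_le.mpr ⟨by linarith, by linarith⟩
        calc |D k k| * |(ρ k 0 - ρ k 1)| ≤ |D k k| * 1 :=
              mul_le_mul_of_nonneg_left h3 (abs_nonneg _)
          _ = |D k k| := mul_one _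
      have hq : D 0 1 * (ρ k 0 - ρ k 1) = D 0 1 ^ 2 / D k k := by
        rw [hs]; ring
      refine ⟨⟨hkk, habs, by nlinarith⟩, hρi1, by rw [h2]; linarith, by rw [h2]; linarith⟩
  have exist : (D k k ≠ 0 ∧ |D 0 1| ≤ |D k k| ∧ D i i < (D 0 1) ^ 2 / D k k) →
      ∀ ι κ : Fin 2, ι ≠ κ →
      ∃ ρ, IsDist2 ρ ∧ ρ i κ = 0 ∧ 0 < vel2 x K ρ i κ ι ∧ vel2 x K ρ k ι κ = 0 := by
    rintro ⟨hkk, habs, hii⟩ ι κ hικ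
    have hr1 : |D 0 1 / D k k| ≤ 1 := by
      rw [abs_div]
      exact div_le_one_of_le₀ habs (abs_nonneg _)
    have hrle := abs_le.mp hr1
    refine ⟨fun a l => if a = i then (if l = ι then 1 else 0)
        else (if l = ι then (1 - D 0 1 / D k k) / 2 else (1 + D 0 1 / D k k) / 2),
      ⟨?_, ?_⟩, ?_, ?_, ?_⟩
    · intro a l
      dsimp only
      split_ifs <;> linarith [hrle.1, hrle.2]
    · intro a
      rcases hcases ι κ hικ with ⟨hι, hκ⟩ | ⟨hι, hκ⟩ <;> subst hι <;>
        by_cases ha : a = i <;>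
        simp [ha, show (1 : Fin 2) ≠ 0 by decide, show (0 : Fin 2) ≠ 1 by decide] <;>
        ring
    · simp [Ne.symm hικ]
    · have hq : D 0 1 * (D 0 1 / D k k) = D 0 1 ^ 2 / D k k := by ring
      rcases hcases ι κ hικ with ⟨hι, hκ⟩ | ⟨hι, hκ⟩ <;> subst hι <;> subst hκ
      · rw [hswap, hvel2, hDik]
        simp [hik.symm, show (1 : Fin 2) ≠ 0 by decide]
        nlinarith [hq, hii]
      · rw [hvel2, hDik]
        simp [hik.symm, show (0 : Fin 2) ≠ 1 by decide]
        nlinarith [hq, hii]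
    · rcases hcases ι κ hικ with ⟨hι, hκ⟩ | ⟨hι, hκ⟩ <;> subst hι <;> subst hκ
      · rw [hvel2, hDki]
        simp [hik.symm, show (1 : Fin 2) ≠ 0 by decide]
        field_simp
        ring
      · rw [hswap, hvel2, hDki]
        simp [hik.symm, show (0 : Fin 2) ≠ 1 by decide]
        field_simp
        ring
  refine ⟨⟨?_, ?_⟩, ?_, exist⟩
  · rintro ⟨ρ, hρ, ι, κ, hικ, h0, hpos, hveq⟩
    exact (key ρ hρ ι κ hικ h0 hpos hveq).1
  · intro h
    obtain ⟨ρ, hρ, h0, hpos, hveq⟩ := exist h 0 1 (by decide)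
    exact ⟨ρ, hρ, 0, 1, by decide, h0, hpos, hveq⟩
  · intro ρ hρ ι κ hικ h0 hpos hveq
    exact (key ρ hρ ι κ hικ h0 hpos hveq).2
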